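/- arXiv:1102.4080 — 5 statements merged into one kernel-verified Lean document; each statement's English description precedes it below -/
import Mathlib

section
/- A probability measure μ on a bounded nonempty subset K of ℝ^d is a probabilistic frame for ℝ^d (i.e., there exist constants 0 < A ≤ B such that A‖x‖² ≤ ∫_K ⟨x,y⟩² dμ(y) ≤ B‖x‖² for all x ∈ ℝ^d) if and only if the support of μ spans ℝ^d. -/
open MeasureTheory RealInnerProductSpace

/-- A probability measure on a bounded nonempty set `K ⊆ ℝ^d` is a probabilistic frame
if and only if its support spans `ℝ^d`. -/
theorem stmt_0 {d : ℕ} (K : Set (EuclideanSpace ℝ (Fin d)))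
    (hK : Bornology.IsBounded K) (hKne : K.Nonempty)
    (μ : Measure (EuclideanSpace ℝ (Fin d))) [IsProbabilityMeasure μ]
    (hμK : μ Kᶜ = 0) :
    (∃ A B : ℝ, 0 < A ∧ A ≤ B ∧ ∀ x : EuclideanSpace ℝ (Fin d),
        A * ‖x‖ ^ 2 ≤ ∫ y, ⟪x, y⟫ ^ 2 ∂μ ∧ (∫ y, ⟪x, y⟫ ^ 2 ∂μ) ≤ B * ‖x‖ ^ 2) ↔
      Submodule.span ℝ
        {x | x ∈ K ∧ ∀ U : Set (EuclideanSpace ℝ (Fin d)), IsOpen U → x ∈ U → 0 < μ U} = ⊤ := by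
  classical
  set S : Set (EuclideanSpace ℝ (Fin d)) :=
    {x | x ∈ K ∧ ∀ U : Set (EuclideanSpace ℝ (Fin d)), IsOpen U → x ∈ U → 0 < μ U} with hSdef
  obtain ⟨M, hM0, hM⟩ : ∃ M : ℝ, 0 ≤ M ∧ ∀ y ∈ K, ‖y‖ ≤ M := by
    obtain ⟨R, hR⟩ := hK.exists_norm_le
    exact ⟨max R 0, le_max_right _ _, fun y hy => (hR y hy).trans (le_max_left _ _)⟩
  have haeK : ∀ᵐ y ∂μ, y ∈ K := by
    rw [ae_iff]
    exact hμK
  have hcont : ∀ x : EuclideanSpace ℝ (Fin d),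
      Continuous fun y : EuclideanSpace ℝ (Fin d) => ⟪x, y⟫ ^ 2 := fun x =>
    (continuous_const.inner continuous_id).pow 2
  have hbound : ∀ x : EuclideanSpace ℝ (Fin d),
      ∀ᵐ y ∂μ, ‖⟪x, y⟫ ^ 2‖ ≤ ‖x‖ ^ 2 * M ^ 2 := by
    intro x
    filter_upwards [haeK] with y hy
    have h1 : |⟪x, y⟫| ≤ ‖x‖ * ‖y‖ := abs_real_inner_le_norm x y
    have h2 : ‖y‖ ≤ M := hM y hy
    have h4 : |⟪x, y⟫| ≤ ‖x‖ * M := by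
      refine h1.trans ?_
      exact mul_le_mul_of_nonneg_left h2 (norm_nonneg x)
    have h5 : |⟪x, y⟫| ^ 2 ≤ (‖x‖ * M) ^ 2 :=
      pow_le_pow_left₀ (abs_nonneg _) h4 2
    rw [Real.norm_eq_abs, abs_pow]
    calc |⟪x, y⟫| ^ 2 ≤ (‖x‖ * M) ^ 2 := h5
      _ = ‖x‖ ^ 2 * M ^ 2 := by ring
  have hint : ∀ x : EuclideanSpace ℝ (Fin d),
      Integrable (fun y => ⟪x, y⟫ ^ 2) μ := fun x =>
    ⟨(hcont x).aestronglyMeasurable, HasFiniteIntegral.of_bounded (hbound x)⟩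
  have hnn : ∀ x : EuclideanSpace ℝ (Fin d), 0 ≤ ∫ y, ⟪x, y⟫ ^ 2 ∂μ := fun x =>
    integral_nonneg fun y => sq_nonneg _
  have hupper : ∀ x : EuclideanSpace ℝ (Fin d),
      (∫ y, ⟪x, y⟫ ^ 2 ∂μ) ≤ M ^ 2 * ‖x‖ ^ 2 := by
    intro x
    have hle : (∫ y, ⟪x, y⟫ ^ 2 ∂μ) ≤ ∫ _, ‖x‖ ^ 2 * M ^ 2 ∂μ := by
      refine integral_mono_ae (hint x) (integrable_const _) ?_
      filter_upwards [hbound x] with y hy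
      exact (le_abs_self _).trans (by simpa [Real.norm_eq_abs] using hy)
    have hc : (∫ _, ‖x‖ ^ 2 * M ^ 2 ∂μ) = ‖x‖ ^ 2 * M ^ 2 := by
      simp [integral_const]
    rw [hc] at hle
    linarith [hle]
  constructor
  · rintro ⟨A, B, hA, hAB, h⟩

    by_contra hne
    -- the complement of the support is μ-null
    have hμS : μ Sᶜ = 0 := by
      set 𝒰 : Set (Set (EuclideanSpace ℝ (Fin d))) := {U | IsOpen U ∧ μ U = 0} with h𝒰
      obtain ⟨T, hTc, hT𝒰, hTU⟩ :=
        TopologicalSpace.isOpen_sUnion_countable 𝒰 fun U hU => hU.1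
      have h1 : μ (⋃₀ 𝒰) = 0 := by
        rw [← hTU]
        exact (measure_sUnion_null_iff hTc).2 fun U hU => (hT𝒰 hU).2
      have h2 : Sᶜ ⊆ Kᶜ ∪ ⋃₀ 𝒰 := by
        intro y hy
        by_cases hyK : y ∈ K
        · right
          simp only [hSdef, Set.mem_compl_iff, Set.mem_setOf_eq, not_and, not_forall] at hy
          obtain ⟨U, hUo, hyU, hμU⟩ := hy hyK
          exact ⟨U, ⟨hUo, by simpa using (not_lt.mp hμU)⟩, hyU⟩
        · exact Or.inl hyK
      exact measure_mono_null h2 (measure_union_null hμK h1)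
    obtain ⟨x, hxmem, hx0⟩ :
        ∃ x : EuclideanSpace ℝ (Fin d), x ∈ (Submodule.span ℝ S)ᗮ ∧ x ≠ 0 := by
      refine Submodule.exists_mem_ne_zero_of_ne_bot ?_
      intro hbot
      exact hne (Submodule.orthogonal_eq_bot_iff.mp hbot)
    have haeS : ∀ᵐ y ∂μ, y ∈ S := by
      rw [ae_iff]
      exact hμS
    have hzero : (∫ y, ⟪x, y⟫ ^ 2 ∂μ) = 0 := by
      have hae : ∀ᵐ y ∂μ, ⟪x, y⟫ ^ 2 = (0 : ℝ) := by
        filter_upwards [haeS] with y hy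
        have h0 : ⟪y, x⟫ = 0 :=
          (Submodule.mem_orthogonal _ x).mp hxmem y (Submodule.subset_span hy)
        rw [real_inner_comm] at h0
        simp [h0]
      rw [integral_congr_ae hae, integral_zero]
    have hx := (h x).1
    rw [hzero] at hx
    have hxn : 0 < ‖x‖ := norm_pos_iff.mpr hx0
    nlinarith [mul_pos hA (pow_pos hxn 2)]
  · intro hspan

    rcases Nat.eq_zero_or_pos d with hd | hd
    · subst hd
      refine ⟨1, 1, one_pos, le_refl _, fun x => ?_⟩
      have hx : x = 0 := Subsingleton.elim x 0
      simp [hx, inner_zero_left]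
    · have hnt : Nontrivial (EuclideanSpace ℝ (Fin d)) := by
        have h0 : 0 < Module.finrank ℝ (EuclideanSpace ℝ (Fin d)) := by
          simpa [finrank_euclideanSpace] using hd
        exact Module.nontrivial_of_finrank_pos h0
      -- continuity of the frame potential
      have hΦcont : Continuous fun x : EuclideanSpace ℝ (Fin d) => ∫ y, ⟪x, y⟫ ^ 2 ∂μ := by
        rw [continuous_iff_continuousAt]
        intro x₀
        apply continuousAt_of_dominated
          (bound := fun _ => (‖x₀‖ + 1) ^ 2 * M ^ 2)
        · exact Filter.Eventually.of_forall fun x => (hcont x).aestronglyMeasurable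
        · filter_upwards [Metric.ball_mem_nhds x₀ one_pos] with x hx
          filter_upwards [hbound x] with y hy
          refine hy.trans ?_
          have hxx : ‖x‖ ≤ ‖x₀‖ + 1 := by
            have h6 := norm_sub_norm_le x x₀
            have hd' : ‖x - x₀‖ < 1 := by
              simpa [dist_eq_norm] using hx
            linarith
          have h7 : ‖x‖ ^ 2 ≤ (‖x₀‖ + 1) ^ 2 :=
            pow_le_pow_left₀ (norm_nonneg x) hxx 2
          exact mul_le_mul_of_nonneg_right h7 (sq_nonneg M)
        · exact integrable_const _
        · exact Filter.Eventually.of_forall fun y =>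
            ((continuous_id.inner continuous_const).pow 2).continuousAt
      obtain ⟨x₀, hx₀mem, hmin⟩ :=
        (isCompact_sphere (0 : EuclideanSpace ℝ (Fin d)) 1).exists_isMinOn
          (NormedSpace.sphere_nonempty.mpr zero_le_one)
          hΦcont.continuousOn
      have hx₀norm : ‖x₀‖ = 1 := mem_sphere_zero_iff_norm.mp hx₀mem
      set A : ℝ := ∫ y, ⟪x₀, y⟫ ^ 2 ∂μ with hAdef
      have hApos : 0 < A := by
        rcases lt_or_eq_of_le (hnn x₀) with h | h
        · exact h
        -- A = 0 leads to a contradiction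
        exfalso
        have hA0 : A = 0 := h.symm
        have hae0 : (fun y => ⟪x₀, y⟫ ^ 2) =ᵐ[μ] (0 : EuclideanSpace ℝ (Fin d) → ℝ) :=
          (integral_eq_zero_iff_of_nonneg_ae
            (Filter.Eventually.of_forall fun y => sq_nonneg _) (hint x₀)).mp hA0
        have hμV : μ {y : EuclideanSpace ℝ (Fin d) | ⟪x₀, y⟫ ≠ 0} = 0 := by
          have h' := hae0
          rw [Filter.EventuallyEq, ae_iff] at h'
          refine measure_mono_null ?_ h'
          intro y hy
          simp only [Set.mem_setOf_eq, Pi.zero_apply] at hy ⊢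
          exact fun hc => hy ((pow_eq_zero_iff two_ne_zero).mp hc)
        have hVopen : IsOpen {y : EuclideanSpace ℝ (Fin d) | ⟪x₀, y⟫ ≠ 0} := by
          have hc : Continuous fun y : EuclideanSpace ℝ (Fin d) => ⟪x₀, y⟫ :=
            continuous_const.inner continuous_id
          exact isOpen_ne_fun hc continuous_const
        -- hence the support is contained in the kernel of ⟪x₀, ·⟫
        have hSker : S ⊆ (LinearMap.ker (innerₛₗ ℝ x₀) :
            Submodule ℝ (EuclideanSpace ℝ (Fin d))) := by
          intro s hs
          by_contra hcon
          have hsV : s ∈ {y : EuclideanSpace ℝ (Fin d) | ⟪x₀, y⟫ ≠ 0} := by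
            simp only [Set.mem_setOf_eq]
            intro h0
            exact hcon (by simpa using h0)
          have hpos := hs.2 _ hVopen hsV
          rw [hμV] at hpos
          exact lt_irrefl 0 hpos
        have hker : Submodule.span ℝ S ≤ LinearMap.ker (innerₛₗ ℝ x₀) :=
          Submodule.span_le.mpr hSker
        rw [hspan] at hker
        have hx₀ker : ⟪x₀, x₀⟫ = 0 := by
          have hk := hker (Submodule.mem_top (x := x₀))
          simpa using hk
        have hx₀0 : x₀ = 0 := inner_self_eq_zero.mp hx₀ker
        rw [hx₀0] at hx₀norm
        simp at hx₀norm
      refine ⟨A, A + M ^ 2, hApos, by nlinarith, fun x => ?_⟩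
      by_cases hx : x = 0
      · simp [hx, inner_zero_left]
      · set u : EuclideanSpace ℝ (Fin d) := ‖x‖⁻¹ • x with hu
        have hxn : 0 < ‖x‖ := norm_pos_iff.mpr hx
        have hun : ‖u‖ = 1 := by
          rw [hu, norm_smul, norm_inv, norm_norm, inv_mul_cancel₀ hxn.ne']
        have huS : u ∈ Metric.sphere (0 : EuclideanSpace ℝ (Fin d)) 1 :=
          mem_sphere_zero_iff_norm.mpr hun
        have hinner : ∀ y : EuclideanSpace ℝ (Fin d),
            ⟪x, y⟫ ^ 2 = ‖x‖ ^ 2 * ⟪u, y⟫ ^ 2 := by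
          intro y
          rw [hu, real_inner_smul_left]
          field_simp
        have hΦx : (∫ y, ⟪x, y⟫ ^ 2 ∂μ) = ‖x‖ ^ 2 * ∫ y, ⟪u, y⟫ ^ 2 ∂μ := by
          rw [← integral_const_mul]
          exact integral_congr_ae (Filter.Eventually.of_forall fun y => hinner y)
        have hAu : A ≤ ∫ y, ⟪u, y⟫ ^ 2 ∂μ := hmin huS
        constructor
        · rw [hΦx]
          nlinarith
        · have hu2 := hupper x
          nlinarith
end

section
/- A probability measure μ on K ⊆ ℝ^d with finite second moments is a probabilistic tight frame for ℝ^d if and only if its second moments satisfy m_{i,j}(μ) = (δ_{i,j}/d)·∫_K ‖x‖² dμ(x) for all i, j = 1, …, d, where m_{i,j}(μ) = ∫_K x^(i) x^(j) dμ(x). -/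
open MeasureTheory RealInnerProductSpace

/- The quadratic form `x ↦ ∫ ⟪x, y⟫² dμ(y)` is `xᵀ M x` for the second-moment matrix `M`, and
`∫ ‖y‖² dμ = tr M`. By polarization, the form equals `A ‖x‖²` exactly when `M = A • 1`, and taking
traces forces `A = (∫ ‖y‖² dμ) / d`. -/

section InnerProductSpace

variable {E : Type*} [NormedAddCommGroup E] [InnerProductSpace ℝ E] [MeasurableSpace E]
  [OpensMeasurableSpace E] {μ : Measure E}

lemma integrable_inner_mul_inner (hint : Integrable (fun y => ‖y‖ ^ 2) μ) (x z : E) :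
    Integrable (fun y => ⟪x, y⟫ * ⟪z, y⟫) μ := by
  refine (hint.const_mul (‖x‖ * ‖z‖)).mono' (by fun_prop) (ae_of_all _ fun y => ?_)
  rw [norm_mul, Real.norm_eq_abs, Real.norm_eq_abs]
  calc |⟪x, y⟫| * |⟪z, y⟫| ≤ (‖x‖ * ‖y‖) * (‖z‖ * ‖y‖) :=
        mul_le_mul (abs_real_inner_le_norm x y) (abs_real_inner_le_norm z y) (abs_nonneg _)
          (by positivity)
    _ = ‖x‖ * ‖z‖ * ‖y‖ ^ 2 := by ring

lemma integral_inner_mul_inner_of_tight (hint : Integrable (fun y => ‖y‖ ^ 2) μ) {A : ℝ}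
    (htight : ∀ x : E, ∫ y, ⟪x, y⟫ ^ 2 ∂μ = A * ‖x‖ ^ 2) (x z : E) :
    ∫ y, ⟪x, y⟫ * ⟪z, y⟫ ∂μ = A * ⟪x, z⟫ := by
  have hsq : ∀ w : E, Integrable (fun y => ⟪w, y⟫ ^ 2) μ := fun w => by
    simpa only [sq] using integrable_inner_mul_inner hint w w
  have hexpand : ∫ y, ⟪x + z, y⟫ ^ 2 ∂μ
      = ∫ y, ⟪x, y⟫ ^ 2 ∂μ + 2 * ∫ y, ⟪x, y⟫ * ⟪z, y⟫ ∂μ + ∫ y, ⟪z, y⟫ ^ 2 ∂μ := by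
    have hxz := (integrable_inner_mul_inner hint x z).const_mul 2
    have hpoint : (fun y => ⟪x + z, y⟫ ^ 2)
        = fun y => ⟪x, y⟫ ^ 2 + 2 * (⟪x, y⟫ * ⟪z, y⟫) + ⟪z, y⟫ ^ 2 := by
      ext y
      rw [inner_add_left]
      ring
    have hxxz : Integrable (fun y => ⟪x, y⟫ ^ 2 + 2 * (⟪x, y⟫ * ⟪z, y⟫)) μ := (hsq x).add hxz
    rw [hpoint, integral_add hxxz (hsq z), integral_add (hsq x) hxz, integral_const_mul]
  have := htight (x + z)
  rw [hexpand, htight x, htight z, norm_add_sq_real] at this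
  linarith

end InnerProductSpace

section EuclideanSpace

variable {ι : Type*} [Fintype ι] {μ : Measure (EuclideanSpace ℝ ι)}

lemma integrable_apply_mul_apply (hint : Integrable (fun y => ‖y‖ ^ 2) μ) (i j : ι) :
    Integrable (fun y : EuclideanSpace ℝ ι => y i * y j) μ := by
  classical
  simpa [EuclideanSpace.inner_single_left] using
    integrable_inner_mul_inner hint (EuclideanSpace.single i (1 : ℝ)) (EuclideanSpace.single j 1)

lemma integral_norm_sq_eq_sum_moments (hint : Integrable (fun y => ‖y‖ ^ 2) μ) :
    ∫ y, ‖y‖ ^ 2 ∂μ = ∑ i, ∫ y, y i * y i ∂μ := by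
  simp_rw [EuclideanSpace.real_norm_sq_eq, sq]
  exact integral_finsetSum _ fun i _ => integrable_apply_mul_apply hint i i

lemma integral_inner_sq_eq_sum_moments (hint : Integrable (fun y => ‖y‖ ^ 2) μ)
    (x : EuclideanSpace ℝ ι) :
    ∫ y, ⟪x, y⟫ ^ 2 ∂μ = ∑ i, ∑ j, x i * x j * ∫ y, y i * y j ∂μ := by
  have hpoint : ∀ y : EuclideanSpace ℝ ι,
      ⟪x, y⟫ ^ 2 = ∑ i, ∑ j, x i * x j * (y i * y j) := fun y => by
    simp only [PiLp.inner_apply, RCLike.inner_apply, conj_trivial, sq, Finset.sum_mul_sum]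
    exact Finset.sum_congr rfl fun i _ => Finset.sum_congr rfl fun j _ => by ring
  simp_rw [hpoint]
  rw [integral_finsetSum _ fun i _ =>
    integrable_finsetSum _ fun j _ => (integrable_apply_mul_apply hint i j).const_mul _]
  refine Finset.sum_congr rfl fun i _ => ?_
  rw [integral_finsetSum _ fun j _ => (integrable_apply_mul_apply hint i j).const_mul _]
  exact Finset.sum_congr rfl fun j _ => integral_const_mul _ _

end EuclideanSpace

theorem stmt_3_general {d : ℕ}
    (μ : Measure (EuclideanSpace ℝ (Fin d)))
    (hint : Integrable (fun y => ‖y‖ ^ 2) μ)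
    (hpos : 0 < ∫ x, ‖x‖ ^ 2 ∂μ) :
    (∃ A : ℝ, 0 < A ∧ ∀ x : EuclideanSpace ℝ (Fin d),
        (∫ y, ⟪x, y⟫ ^ 2 ∂μ) = A * ‖x‖ ^ 2) ↔
      ∀ i j : Fin d,
        (∫ x, x i * x j ∂μ) = (if i = j then (1 : ℝ) / d else 0) * ∫ x, ‖x‖ ^ 2 ∂μ := by
  have htrace := integral_norm_sq_eq_sum_moments hint
  generalize ∫ x, ‖x‖ ^ 2 ∂μ = M at hpos htrace ⊢
  constructor
  · rintro ⟨A, -, htight⟩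
    have hmoment : ∀ i j : Fin d, ∫ y, y i * y j ∂μ = A * if i = j then 1 else 0 := fun i j => by
      simpa [EuclideanSpace.inner_single_left, PiLp.single_apply, eq_comm] using
        integral_inner_mul_inner_of_tight hint htight
          (EuclideanSpace.single i (1 : ℝ)) (EuclideanSpace.single j 1)
    simp only [hmoment, if_true, mul_one, Finset.sum_const, Finset.card_univ, Fintype.card_fin,
      nsmul_eq_mul] at htrace
    have hd : (d : ℝ) ≠ 0 := by rintro hd; rw [hd, zero_mul] at htrace; linarith
    intro i j
    rw [hmoment, htrace]
    split_ifs
    · field_simp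
    · simp
  · intro hmoment
    simp only [hmoment, if_true, Finset.sum_const, Finset.card_univ, Fintype.card_fin,
      nsmul_eq_mul] at htrace
    have hd : 0 < d := Nat.pos_of_ne_zero fun hd => by simp [hd] at htrace; linarith
    refine ⟨M / d, by positivity, fun x => ?_⟩
    rw [integral_inner_sq_eq_sum_moments hint, EuclideanSpace.real_norm_sq_eq]
    simp only [hmoment, ite_mul, zero_mul, mul_ite, mul_zero, Finset.sum_ite_eq, Finset.mem_univ,
      if_true, Finset.mul_sum]
    exact Finset.sum_congr rfl fun i _ => by ring

/-- A probability measure with finite second moments (and not supported on `{0}`) is a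
probabilistic tight frame if and only if its second moments satisfy
`m_{i,j}(μ) = (δ_{i,j}/d) ∫ ‖x‖² dμ(x)`. -/
theorem stmt_3 {d : ℕ} (K : Set (EuclideanSpace ℝ (Fin d)))
    (μ : Measure (EuclideanSpace ℝ (Fin d))) [IsProbabilityMeasure μ]
    (hμK : μ Kᶜ = 0) (hint : Integrable (fun y => ‖y‖ ^ 2) μ)
    (hpos : 0 < ∫ x, ‖x‖ ^ 2 ∂μ) :
    (∃ A : ℝ, 0 < A ∧ ∀ x : EuclideanSpace ℝ (Fin d),
        (∫ y, ⟪x, y⟫ ^ 2 ∂μ) = A * ‖x‖ ^ 2) ↔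
      ∀ i j : Fin d,
        (∫ x, x i * x j ∂μ) = (if i = j then (1 : ℝ) / d else 0) * ∫ x, ‖x‖ ^ 2 ∂μ :=
  stmt_3_general μ hint hpos
end

section
/- If {x_i}_{i=1}^n ⊂ S¹ is a finite unit norm tight frame for ℝ² and f : ℝ → ℝ is a function such that y ↦ f(⟨x_i,y⟩) is measurable and ∫_{S¹} f(⟨x_i,y⟩) dσ(y) = 1 for each i, where σ is the uniform probability measure on the circle, then the probability measure μ with dμ(x) = (1/n)∑_{i=1}^n f(⟨x_i,x⟩) dσ(x) satisfies ∫_{S¹} |⟨y,x⟩|² dμ(x) = ‖y‖²/2 for all y ∈ ℝ², i.e., μ is a probabilistic unit norm tight frame for ℝ². -/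
/-!
For a unit vector `w` let `Q_w(y) = ∫ ⟪y, z⟫² f(⟪w, z⟫) dσ(z)`. Complete `w` to an orthonormal
basis `(w, w')`. The reflection fixing `w` and negating `w'` preserves `σ` and changes the sign of
the mixed moment `∫ ⟪w, z⟫ ⟪w', z⟫ f(⟪w, z⟫) dσ`, which therefore vanishes; and
`⟪w, z⟫² + ⟪w', z⟫² = 1` on the circle. Hence
`Q_w(y) = A ⟪w, y⟫² + (1 - A) (‖y‖² - ⟪w, y⟫²)` with `A = Q_w(w)`, and `A` does not depend on
`w` because isometries act transitively on unit vectors. Averaging over the frame, the tight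
frame identity `∑ ⟪x_i, y⟫² = (n/2) ‖y‖²` turns this into `‖y‖² / 2`.
-/

open MeasureTheory RealInnerProductSpace Module Submodule

variable {E : Type*} [NormedAddCommGroup E] [InnerProductSpace ℝ E]

theorem OrthonormalBasis.exists_apply_eq {ι : Type*} [Fintype ι] (b : OrthonormalBasis ι ℝ E)
    (i : ι) {w : E} (hw : ‖w‖ = 1) : ∃ b' : OrthonormalBasis ι ℝ E, b' i = w :=
  ⟨b.map (reflection (ℝ ∙ (b i - w))ᗮ),
    by rw [b.map_apply, reflection_sub (by rw [b.norm_eq_one, hw])]⟩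

theorem Submodule.inner_reflection_right (K : Submodule ℝ E) [K.HasOrthogonalProjection]
    (a z : E) : ⟪a, K.reflection z⟫ = ⟪K.reflection a, z⟫ := by
  rw [← K.reflection.inner_map_map, reflection_reflection]

noncomputable def secondMoment [MeasurableSpace E] (σ : Measure E) (f : ℝ → ℝ) (w y : E) : ℝ :=
  ∫ z, ⟪y, z⟫ ^ 2 * f ⟪w, z⟫ ∂σ

section

variable [MeasurableSpace E] [BorelSpace E] {σ : Measure E}

theorem integral_comp_linearIsometryEquiv {T : E ≃ₗᵢ[ℝ] E} (hT : σ.map T = σ) (g : E → ℝ) :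
    ∫ z, g (T z) ∂σ = ∫ z, g z ∂σ :=
  MeasurePreserving.integral_comp ⟨T.continuous.measurable, hT⟩
    T.toHomeomorph.measurableEmbedding g

theorem integral_comp_inner_eq_of_norm_eq (hσ : ∀ T : E ≃ₗᵢ[ℝ] E, σ.map T = σ) {u v : E}
    (h : ‖u‖ = ‖v‖) (F : ℝ → ℝ) :
    ∫ z, F ⟪u, z⟫ ∂σ = ∫ z, F ⟪v, z⟫ ∂σ := by
  set R := reflection (ℝ ∙ (u - v))ᗮ
  have hR : ∀ z, ⟪v, R z⟫ = ⟪u, z⟫ := fun z => by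
    rw [← reflection_sub h, R.inner_map_map]
  simp_rw [← hR]
  exact integral_comp_linearIsometryEquiv (hσ R) fun z => F ⟪v, z⟫

theorem integral_inner_mul_inner_mul_eq_zero (hσ : ∀ T : E ≃ₗᵢ[ℝ] E, σ.map T = σ) {u v w : E}
    (hu : ⟪u, v⟫ = 0) (hw : ⟪w, v⟫ = 0) (f : ℝ → ℝ) : ∫ z, ⟪u, z⟫ * ⟪v, z⟫ * f ⟪w, z⟫ ∂σ = 0 := by
  set R := reflection (ℝ ∙ v)ᗮ
  have hfix : ∀ {a : E}, ⟪a, v⟫ = 0 → ∀ z, ⟪a, R z⟫ = ⟪a, z⟫ := fun ha z => by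
    rw [inner_reflection_right,
      reflection_mem_subspace_eq_self (mem_orthogonal_singleton_iff_inner_left.2 ha)]
  have hneg : ∀ z, ⟪v, R z⟫ = -⟪v, z⟫ := fun z => by
    rw [inner_reflection_right, reflection_orthogonalComplement_singleton_eq_neg, inner_neg_left]
  have h := integral_comp_linearIsometryEquiv (hσ R) fun z => ⟪u, z⟫ * ⟪v, z⟫ * f ⟪w, z⟫
  simp only [hfix hu, hfix hw, hneg, mul_neg, neg_mul, integral_neg] at h
  linarith

theorem integrable_inner_mul_inner_mul (hsphere : ∀ᵐ z ∂σ, ‖z‖ = 1) {g : E → ℝ}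
    (hg : Integrable g σ) (u v : E) :
    Integrable (fun z => ⟪u, z⟫ * ⟪v, z⟫ * g z) σ := by
  refine hg.bdd_mul (c := ‖u‖ * ‖v‖) (by fun_prop) ?_
  filter_upwards [hsphere] with z hz
  rw [norm_mul]
  gcongr <;> simpa [hz] using norm_inner_le_norm (𝕜 := ℝ) _ z

theorem secondMoment_basis_zero_eq (hσ : ∀ T : E ≃ₗᵢ[ℝ] E, σ.map T = σ)
    (hsphere : ∀ᵐ z ∂σ, ‖z‖ = 1) (b : OrthonormalBasis (Fin 2) ℝ E) {f : ℝ → ℝ}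
    (hf : ∫ z, f ⟪b 0, z⟫ ∂σ = 1) (y : E) :
    secondMoment σ f (b 0) y = secondMoment σ f (b 0) (b 0) * ⟪b 0, y⟫ ^ 2 +
      (1 - secondMoment σ f (b 0) (b 0)) * (‖y‖ ^ 2 - ⟪b 0, y⟫ ^ 2) := by
  set a := ⟪b 0, y⟫
  set c := ⟪b 1, y⟫
  set g : E → ℝ := fun z => f ⟪b 0, z⟫
  have hg : Integrable g σ := .of_integral_ne_zero (by simp [g, hf])
  have h00 := integrable_inner_mul_inner_mul hsphere hg (b 0) (b 0)
  have h01 := integrable_inner_mul_inner_mul hsphere hg (b 0) (b 1)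
  have hsum : ∀ v : E, ⟪b 0, v⟫ ^ 2 + ⟪b 1, v⟫ ^ 2 = ‖v‖ ^ 2 := fun v => by
    rw [← b.sum_sq_inner_right, Fin.sum_univ_two]
  have hpt : ∀ᵐ z ∂σ, ⟪y, z⟫ ^ 2 * g z = a ^ 2 * (⟪b 0, z⟫ * ⟪b 0, z⟫ * g z) +
      2 * a * c * (⟪b 0, z⟫ * ⟪b 1, z⟫ * g z) + c ^ 2 * (g z - ⟪b 0, z⟫ * ⟪b 0, z⟫ * g z) := by
    filter_upwards [hsphere] with z hz
    have hyz : ⟪y, z⟫ = a * ⟪b 0, z⟫ + c * ⟪b 1, z⟫ := by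
      rw [← b.sum_inner_mul_inner y z, Fin.sum_univ_two, real_inner_comm (b 0),
        real_inner_comm (b 1)]
    rw [hyz]
    linear_combination (c ^ 2 * g z) * (hsum z).trans (by rw [hz, one_pow])
  have hcross : ∫ z, ⟪b 0, z⟫ * ⟪b 1, z⟫ * g z ∂σ = 0 :=
    have h01 : ⟪b 0, b 1⟫ = 0 := b.orthonormal.2 (by decide)
    integral_inner_mul_inner_mul_eq_zero hσ h01 h01 f
  have hA : ∫ z, ⟪b 0, z⟫ * ⟪b 0, z⟫ * g z ∂σ = secondMoment σ f (b 0) (b 0) := by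
    simp only [secondMoment, g, sq]
  rw [secondMoment, integral_congr_ae hpt, integral_add, integral_add, integral_const_mul,
    integral_const_mul, integral_const_mul, integral_sub hg h00, hcross, hA, hf, ← hsum y]
  · ring
  · exact h00.const_mul _
  · exact h01.const_mul _
  · exact (h00.const_mul _).add (h01.const_mul _)
  · exact (hg.sub h00).const_mul _

theorem secondMoment_self_eq_of_norm_eq (hσ : ∀ T : E ≃ₗᵢ[ℝ] E, σ.map T = σ) (f : ℝ → ℝ) {u v : E}
    (h : ‖u‖ = ‖v‖) :
    secondMoment σ f u u = secondMoment σ f v v :=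
  integral_comp_inner_eq_of_norm_eq hσ h fun t => t ^ 2 * f t

theorem secondMoment_eq_of_norm_eq_one [FiniteDimensional ℝ E] (hE : finrank ℝ E = 2)
    (hσ : ∀ T : E ≃ₗᵢ[ℝ] E, σ.map T = σ) (hsphere : ∀ᵐ z ∂σ, ‖z‖ = 1) {f : ℝ → ℝ} {w : E}
    (hw : ‖w‖ = 1) (hf : ∫ z, f ⟪w, z⟫ ∂σ = 1) (y : E) :
    secondMoment σ f w y = secondMoment σ f w w * ⟪w, y⟫ ^ 2 +
      (1 - secondMoment σ f w w) * (‖y‖ ^ 2 - ⟪w, y⟫ ^ 2) := by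
  obtain ⟨b, rfl⟩ := ((stdOrthonormalBasis ℝ E).reindex (finCongr hE)).exists_apply_eq 0 hw
  exact secondMoment_basis_zero_eq hσ hsphere b hf y

end

theorem integral_withDensity_ofReal_mul_sum {α ι : Type*} [MeasurableSpace α] [Fintype ι]
    {μ : Measure α} {c : ℝ} (hc : 0 ≤ c) {φ : ι → α → ℝ} (hφ : ∀ i, Measurable (φ i))
    (hφ0 : ∀ i z, 0 ≤ φ i z) {g : α → ℝ} (hg : ∀ i, Integrable (fun z => g z * φ i z) μ) :
    ∫ z, g z ∂μ.withDensity (fun z => ENNReal.ofReal (c * ∑ i, φ i z)) =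
      c * ∑ i, ∫ z, g z * φ i z ∂μ := by
  rw [integral_withDensity_eq_integral_toReal_smul (by fun_prop)
    (.of_forall fun _ => ENNReal.ofReal_lt_top), ← integral_finsetSum _ fun i _ => hg i,
    ← integral_const_mul]
  congr with z
  rw [ENNReal.toReal_ofReal (mul_nonneg hc (Finset.sum_nonneg fun i _ => hφ0 i z)), smul_eq_mul,
    mul_assoc, Finset.sum_mul]
  simp only [mul_comm (φ _ z)]

/-- A FUNTF mixture of densities against the uniform measure on the circle is a
probabilistic unit norm tight frame for `ℝ²`. -/
theorem stmt_5 {n : ℕ} (hn : 0 < n)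
    (σ : Measure (EuclideanSpace ℝ (Fin 2))) [IsProbabilityMeasure σ]
    (hσsphere : σ (Metric.sphere (0 : EuclideanSpace ℝ (Fin 2)) 1) = 1)
    (hσinv : ∀ T : EuclideanSpace ℝ (Fin 2) ≃ₗᵢ[ℝ] EuclideanSpace ℝ (Fin 2),
      Measure.map T σ = σ)
    (x : Fin n → EuclideanSpace ℝ (Fin 2))
    (hxnorm : ∀ i, ‖x i‖ = 1)
    (hFUNTF : ∀ y : EuclideanSpace ℝ (Fin 2),
      ∑ i, ⟪x i, y⟫ ^ 2 = ((n : ℝ) / 2) * ‖y‖ ^ 2)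
    (f : ℝ → ℝ) (hf : ∀ t, 0 ≤ f t)
    (hmeas : ∀ i, Measurable fun y : EuclideanSpace ℝ (Fin 2) => f ⟪x i, y⟫)
    (hnorm : ∀ i, (∫ y, f ⟪x i, y⟫ ∂σ) = 1) :
    ∀ y : EuclideanSpace ℝ (Fin 2),
      (∫ z, ⟪y, z⟫ ^ 2
          ∂(σ.withDensity fun z => ENNReal.ofReal ((n : ℝ)⁻¹ * ∑ i, f ⟪x i, z⟫))) =
        ‖y‖ ^ 2 / 2 := by
  intro y
  have hsphere : ∀ᵐ z ∂σ, ‖z‖ = 1 :=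
    ((ae_iff_measure_eq Metric.isClosed_sphere.measurableSet.nullMeasurableSet).2
      (by rw [measure_univ]; exact hσsphere)).mono fun z hz =>
        mem_sphere_zero_iff_norm.1 hz
  obtain ⟨A, hA⟩ : ∃ A, ∀ i, secondMoment σ f (x i) (x i) = A :=
    ⟨_, fun i => secondMoment_self_eq_of_norm_eq hσinv f
      ((hxnorm i).trans (hxnorm ⟨0, hn⟩).symm)⟩
  have hmoment : ∀ i, ∫ z, ⟪y, z⟫ ^ 2 * f ⟪x i, z⟫ ∂σ =
      A * ⟪x i, y⟫ ^ 2 + (1 - A) * (‖y‖ ^ 2 - ⟪x i, y⟫ ^ 2) := fun i => by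
    rw [← hA i]
    exact secondMoment_eq_of_norm_eq_one finrank_euclideanSpace_fin hσinv hsphere (hxnorm i)
      (hnorm i) y
  have hint : ∀ i, Integrable (fun z => ⟪y, z⟫ ^ 2 * f ⟪x i, z⟫) σ := fun i => by
    simpa only [sq] using integrable_inner_mul_inner_mul hsphere
      (.of_integral_ne_zero (by simp [hnorm i])) y y
  rw [integral_withDensity_ofReal_mul_sum (by positivity) hmeas (fun i z => hf _) hint]
  simp only [hmoment, Finset.sum_add_distrib, ← Finset.mul_sum, Finset.sum_sub_distrib,
    Finset.sum_const, Finset.card_univ, Fintype.card_fin, nsmul_eq_mul, hFUNTF]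
  field_simp
  ring
end

section
/- If G ⊂ O(ℝ^d) is an irreducible finite group, then for any nonzero x ∈ ℝ^d, the orbit {gx : g ∈ G} is a finite tight frame for ℝ^d, i.e., there is A > 0 with ∑_{g∈G} |⟨y, gx⟩|² = A‖y‖² for all y ∈ ℝ^d (with A = |G|·‖x‖²/d). -/
open RealInnerProductSpace

/-- The orbit of a nonzero vector under a finite irreducible subgroup of the orthogonal
group is a finite tight frame with frame bound `|G| ‖x‖² / d`. -/
theorem stmt_7 {d : ℕ}
    (G : Subgroup (EuclideanSpace ℝ (Fin d) ≃ₗᵢ[ℝ] EuclideanSpace ℝ (Fin d))) [Fintype G]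
    (hirr : ∀ x : EuclideanSpace ℝ (Fin d), x ≠ 0 →
      Submodule.span ℝ {y | ∃ g ∈ G, g x = y} = ⊤)
    (x : EuclideanSpace ℝ (Fin d)) (hx : x ≠ 0) :
    ∀ y : EuclideanSpace ℝ (Fin d),
      ∑ g : G, ⟪y, (g : EuclideanSpace ℝ (Fin d) ≃ₗᵢ[ℝ] EuclideanSpace ℝ (Fin d)) x⟫ ^ 2 =
        (Fintype.card G * ‖x‖ ^ 2 / d) * ‖y‖ ^ 2 := by
  haveI : Nontrivial (EuclideanSpace ℝ (Fin d)) := nontrivial_of_ne x 0 hx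
  set T : EuclideanSpace ℝ (Fin d) →ₗ[ℝ] EuclideanSpace ℝ (Fin d) :=
    ∑ g : G, ((innerSL ℝ ((g : EuclideanSpace ℝ (Fin d) ≃ₗᵢ[ℝ] EuclideanSpace ℝ (Fin d)) x)).toLinearMap.smulRight
      ((g : EuclideanSpace ℝ (Fin d) ≃ₗᵢ[ℝ] EuclideanSpace ℝ (Fin d)) x))
    with hT_def
  have hTapp : ∀ y : EuclideanSpace ℝ (Fin d),
      T y = ∑ g : G, ⟪(g : EuclideanSpace ℝ (Fin d) ≃ₗᵢ[ℝ] EuclideanSpace ℝ (Fin d)) x, y⟫ •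
        (g : EuclideanSpace ℝ (Fin d) ≃ₗᵢ[ℝ] EuclideanSpace ℝ (Fin d)) x := by
    intro y
    simp only [hT_def, LinearMap.sum_apply, LinearMap.smulRight_apply,
      ContinuousLinearMap.coe_coe, innerSL_apply_apply]
  have hsym : T.IsSymmetric := by
    intro y z
    simp only [hTapp, inner_sum, sum_inner, real_inner_smul_left, real_inner_smul_right]
    refine Finset.sum_congr rfl fun g _ => ?_
    rw [real_inner_comm y, real_inner_comm z]; ring
  have hcomm : ∀ h : G, ∀ y : EuclideanSpace ℝ (Fin d),
      T ((h : EuclideanSpace ℝ (Fin d) ≃ₗᵢ[ℝ] EuclideanSpace ℝ (Fin d)) y)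
        = (h : EuclideanSpace ℝ (Fin d) ≃ₗᵢ[ℝ] EuclideanSpace ℝ (Fin d)) (T y) := by
    intro h y
    rw [hTapp, hTapp, map_sum]
    rw [← Equiv.sum_comp (Equiv.mulLeft h)]
    refine Finset.sum_congr rfl fun g _ => ?_
    have hg : ((Equiv.mulLeft h g : G) : EuclideanSpace ℝ (Fin d) ≃ₗᵢ[ℝ] EuclideanSpace ℝ (Fin d)) x
        = (h : EuclideanSpace ℝ (Fin d) ≃ₗᵢ[ℝ] EuclideanSpace ℝ (Fin d))
          ((g : EuclideanSpace ℝ (Fin d) ≃ₗᵢ[ℝ] EuclideanSpace ℝ (Fin d)) x) := by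
      simp [Equiv.coe_mulLeft, Submonoid.coe_mul]
    rw [hg, LinearIsometryEquiv.inner_map_map, LinearIsometryEquiv.map_smul]
  obtain ⟨μ, hμ⟩ : ∃ μ, Module.End.HasEigenvalue T μ :=
    ⟨_, hsym.hasEigenvalue_iSup_of_finiteDimensional⟩
  obtain ⟨v, hv, hv0⟩ := hμ.exists_hasEigenvector
  -- T = μ • id
  have htop : ∀ y : EuclideanSpace ℝ (Fin d), T y = μ • y := by
    have hsub : {y | ∃ g ∈ G, g v = y} ⊆ (Module.End.eigenspace T μ : Submodule ℝ _) := by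
      rintro _ ⟨g, hg, rfl⟩
      have h2 : T v = μ • v := Module.End.HasEigenvector.apply_eq_smul ⟨hv, hv0⟩
      have h1 : T (((⟨g, hg⟩ : G) : EuclideanSpace ℝ (Fin d) ≃ₗᵢ[ℝ] EuclideanSpace ℝ (Fin d)) v)
          = ((⟨g, hg⟩ : G) : EuclideanSpace ℝ (Fin d) ≃ₗᵢ[ℝ] EuclideanSpace ℝ (Fin d)) (T v) :=
        hcomm ⟨g, hg⟩ v
      rw [h2, LinearIsometryEquiv.map_smul] at h1
      exact Module.End.mem_eigenspace_iff.mpr h1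
    have := Submodule.span_le.mpr hsub
    rw [hirr v hv0] at this
    intro y
    have hy : y ∈ Module.End.eigenspace T μ := this trivial
    simpa [Module.End.mem_eigenspace_iff] using hy
  -- the key formula
  have key : ∀ y : EuclideanSpace ℝ (Fin d),
      ∑ g : G, ⟪y, (g : EuclideanSpace ℝ (Fin d) ≃ₗᵢ[ℝ] EuclideanSpace ℝ (Fin d)) x⟫ ^ 2
        = μ * ‖y‖ ^ 2 := by
    intro y
    have h1 : ⟪y, T y⟫ = μ * ‖y‖ ^ 2 := by
      rw [htop y, real_inner_smul_right, real_inner_self_eq_norm_sq]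
    rw [hTapp y, inner_sum] at h1
    rw [← h1]
    refine Finset.sum_congr rfl fun g _ => ?_
    rw [real_inner_smul_right, real_inner_comm, sq]
  -- compute μ
  have hd : (d : ℝ) ≠ 0 := by
    have : d ≠ 0 := by
      rintro rfl
      exact hx (Subsingleton.elim x 0)
    exact_mod_cast this
  have hμval : μ = Fintype.card G * ‖x‖ ^ 2 / d := by
    have hsum : ∑ i : Fin d, ∑ g : G,
        ⟪(EuclideanSpace.single i (1:ℝ)), (g : EuclideanSpace ℝ (Fin d) ≃ₗᵢ[ℝ] EuclideanSpace ℝ (Fin d)) x⟫ ^ 2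
        = μ * d := by
      have : ∀ i : Fin d, ∑ g : G,
          ⟪(EuclideanSpace.single i (1:ℝ)), (g : EuclideanSpace ℝ (Fin d) ≃ₗᵢ[ℝ] EuclideanSpace ℝ (Fin d)) x⟫ ^ 2
          = μ * 1 := by
        intro i
        rw [key (EuclideanSpace.single i (1:ℝ))]
        congr 1
        rw [EuclideanSpace.norm_single]
        norm_num
      calc ∑ i : Fin d, ∑ g : G,
          ⟪(EuclideanSpace.single i (1:ℝ)), (g : EuclideanSpace ℝ (Fin d) ≃ₗᵢ[ℝ] EuclideanSpace ℝ (Fin d)) x⟫ ^ 2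
          = ∑ _i : Fin d, μ * 1 := Finset.sum_congr rfl fun i _ => this i
        _ = μ * d := by simp [mul_comm]
    have hsum2 : ∑ i : Fin d, ∑ g : G,
        ⟪(EuclideanSpace.single i (1:ℝ)), (g : EuclideanSpace ℝ (Fin d) ≃ₗᵢ[ℝ] EuclideanSpace ℝ (Fin d)) x⟫ ^ 2
        = Fintype.card G * ‖x‖ ^ 2 := by
      rw [Finset.sum_comm]
      have : ∀ g : G, ∑ i : Fin d,
          ⟪(EuclideanSpace.single i (1:ℝ)), (g : EuclideanSpace ℝ (Fin d) ≃ₗᵢ[ℝ] EuclideanSpace ℝ (Fin d)) x⟫ ^ 2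
          = ‖x‖ ^ 2 := by
        intro g
        have hn : ‖(g : EuclideanSpace ℝ (Fin d) ≃ₗᵢ[ℝ] EuclideanSpace ℝ (Fin d)) x‖ = ‖x‖ :=
          (g : EuclideanSpace ℝ (Fin d) ≃ₗᵢ[ℝ] EuclideanSpace ℝ (Fin d)).norm_map x
      -- ∑ i ⟪e i, w⟫² = ‖w‖²
        calc ∑ i : Fin d, ⟪(EuclideanSpace.single i (1:ℝ)), (g : EuclideanSpace ℝ (Fin d) ≃ₗᵢ[ℝ] EuclideanSpace ℝ (Fin d)) x⟫ ^ 2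
            = ∑ i : Fin d, ((g : EuclideanSpace ℝ (Fin d) ≃ₗᵢ[ℝ] EuclideanSpace ℝ (Fin d)) x i) ^ 2 := by
              refine Finset.sum_congr rfl fun i _ => ?_
              rw [EuclideanSpace.inner_single_left]
              norm_num
          _ = ‖(g : EuclideanSpace ℝ (Fin d) ≃ₗᵢ[ℝ] EuclideanSpace ℝ (Fin d)) x‖ ^ 2 := by
              rw [EuclideanSpace.norm_eq, Real.sq_sqrt (by positivity)]
              refine Finset.sum_congr rfl fun i _ => ?_
              rw [Real.norm_eq_abs, sq_abs]
          _ = ‖x‖ ^ 2 := by rw [hn]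
      calc ∑ g : G, ∑ i : Fin d,
          ⟪(EuclideanSpace.single i (1:ℝ)), (g : EuclideanSpace ℝ (Fin d) ≃ₗᵢ[ℝ] EuclideanSpace ℝ (Fin d)) x⟫ ^ 2
          = ∑ _g : G, ‖x‖ ^ 2 := Finset.sum_congr rfl fun g _ => this g
        _ = Fintype.card G * ‖x‖ ^ 2 := by simp [mul_comm]
    have hmain : μ * d = Fintype.card G * ‖x‖ ^ 2 := by rw [← hsum, hsum2]
    rw [eq_div_iff hd]
    linarith [hmain]
  intro y
  rw [key y, hμval]
end

section
/- Let X_1, …, X_n be independent random vectors each distributed according to a probabilistic unit norm tight frame on S^{d-1}. Then E‖(1/n)∑_{k=1}^n X_k X_k^T − (1/d)I_d‖_F² = (1/n)(1 − 1/d). -/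
/-!
Each entry `(i, j)` of `(1/n) ∑ X_k X_kᵀ` is the empirical mean of the independent variables
`X_k i * X_k j`, whose common mean `δ_ij / d` comes from polarizing the tight frame identity.
Its mean square deviation from `δ_ij / d` is therefore `n⁻² ∑_k Var(X_k i * X_k j)`, and summed
over all entries, `∑_ij Var(y_i y_j) = E ‖y‖⁴ - ∑_ij (δ_ij / d)² = 1 - 1/d` because `‖y‖ = 1`.
-/

open MeasureTheory ProbabilityTheory RealInnerProductSpace

section EmpiricalMean

variable {Ω ι : Type*} [MeasurableSpace Ω] {P : Measure Ω} [IsProbabilityMeasure P]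
  [Fintype ι] [Nonempty ι]

theorem integral_sq_average_sub_eq_sum_variance {Y : ι → Ω → ℝ} {m : ℝ}
    (hY : ∀ k, MemLp (Y k) 2 P) (hindep : Pairwise fun k l => IndepFun (Y k) (Y l) P)
    (hmean : ∀ k, P[Y k] = m) :
    ∫ ω, ((Fintype.card ι : ℝ)⁻¹ * ∑ k, Y k ω - m) ^ 2 ∂P
      = (Fintype.card ι : ℝ)⁻¹ ^ 2 * ∑ k, Var[Y k; P] := by
  set c : ℝ := (Fintype.card ι : ℝ)⁻¹
  have hsum : MemLp (fun ω => ∑ k, Y k ω) 2 P := memLp_finsetSum _ fun k _ => hY k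
  have hmean_avg : P[fun ω => c * ∑ k, Y k ω] = m := by
    rw [integral_const_mul, integral_finsetSum _ fun k _ => (hY k).integrable one_le_two]
    simp [hmean, c]
  calc ∫ ω, (c * ∑ k, Y k ω - m) ^ 2 ∂P
      = Var[fun ω => c * ∑ k, Y k ω; P] := by
        rw [variance_eq_integral (hsum.const_mul c).aemeasurable, hmean_avg]
    _ = c ^ 2 * Var[∑ k, Y k; P] := by
        simp_rw [← Finset.sum_apply]
        exact variance_const_mul c _ P
    _ = c ^ 2 * ∑ k, Var[Y k; P] := by
        rw [IndepFun.variance_sum (fun k _ => hY k) fun k _ l _ hkl => hindep hkl]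

theorem integral_sq_average_comp_sub_eq_sum_variance {E : Type*} [MeasurableSpace E]
    {μ : ι → Measure E} {X : ι → Ω → E} {f : E → ℝ} {m : ℝ}
    (hindep : iIndepFun X P) (hX : ∀ k, MeasurePreserving (X k) P (μ k)) (hf : Measurable f)
    (hL2 : ∀ k, MemLp f 2 (μ k)) (hmean : ∀ k, ∫ y, f y ∂μ k = m) :
    ∫ ω, ((Fintype.card ι : ℝ)⁻¹ * ∑ k, f (X k ω) - m) ^ 2 ∂P
      = (Fintype.card ι : ℝ)⁻¹ ^ 2 * ∑ k, Var[f; μ k] := by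
  have hmean' (k) : P[fun ω => f (X k ω)] = m := by
    rw [← hmean k, ← (hX k).map_eq, integral_map (hX k).aemeasurable hf.aestronglyMeasurable]
  rw [integral_sq_average_sub_eq_sum_variance (Y := fun k ω => f (X k ω))
    (fun k => (hL2 k).comp_measurePreserving (hX k))
    (fun k l hkl => (hindep.indepFun hkl).comp hf hf) hmean']
  simp_rw [(hX _).variance_fun_comp hf.aemeasurable]

end EmpiricalMean

section TightFrame

theorem ae_norm_eq_one_of_measure_sphere {E : Type*} [NormedAddCommGroup E] [MeasurableSpace E]
    [BorelSpace E] {μ : Measure E} [IsProbabilityMeasure μ] (h : μ (Metric.sphere 0 1) = 1) :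
    ∀ᵐ y ∂μ, ‖y‖ = 1 := by
  have hs : ∀ᵐ y ∂μ, y ∈ Metric.sphere (0 : E) 1 := by
    rw [ae_mem_iff_measure_eq Metric.isClosed_sphere.measurableSet.nullMeasurableSet, h,
      measure_univ]
  exact hs.mono fun y hy => mem_sphere_zero_iff_norm.1 hy

variable {E : Type*} [NormedAddCommGroup E] [InnerProductSpace ℝ E] [MeasurableSpace E]
  {μ : Measure E}

theorem memLp_inner_mul_inner [OpensMeasurableSpace E] [IsFiniteMeasure μ]
    (hμ : ∀ᵐ y ∂μ, ‖y‖ ≤ 1) (x x' : E) (p) :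
    MemLp (fun y => ⟪x, y⟫ * ⟪x', y⟫) p μ := by
  refine MemLp.of_bound (by fun_prop) (‖x‖ * ‖x'‖) ?_
  filter_upwards [hμ] with y hy
  rw [norm_mul]
  gcongr
  · exact (norm_inner_le_norm x y).trans (mul_le_of_le_one_right (norm_nonneg x) hy)
  · exact (norm_inner_le_norm x' y).trans (mul_le_of_le_one_right (norm_nonneg x') hy)

theorem integral_inner_mul_inner {A : ℝ} (hint : ∀ x, Integrable (fun y => ⟪x, y⟫ ^ 2) μ)
    (htight : ∀ x, ∫ y, ⟪x, y⟫ ^ 2 ∂μ = ‖x‖ ^ 2 / A) (x x' : E) :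
    ∫ y, ⟪x, y⟫ * ⟪x', y⟫ ∂μ = ⟪x, x'⟫ / A := by
  have polarization : (fun y => ⟪x, y⟫ * ⟪x', y⟫)
      = fun y => (⟪x + x', y⟫ ^ 2 - ⟪x, y⟫ ^ 2 - ⟪x', y⟫ ^ 2) / 2 := by
    funext y; rw [inner_add_left]; ring
  rw [polarization, integral_div,
    integral_sub (f := fun y => ⟪x + x', y⟫ ^ 2 - ⟪x, y⟫ ^ 2) ((hint _).sub (hint _)) (hint _),
    integral_sub (hint _) (hint _), htight, htight, htight, norm_add_sq_real]
  ring

end TightFrame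

section Euclidean

variable {d : ℕ} {μ : Measure (EuclideanSpace ℝ (Fin d))}

theorem memLp_apply_mul_apply [IsFiniteMeasure μ] (hμ : ∀ᵐ y ∂μ, ‖y‖ ≤ 1) (i j : Fin d) (p) :
    MemLp (fun y => y i * y j) p μ := by
  simpa [EuclideanSpace.inner_single_left] using
    memLp_inner_mul_inner hμ (EuclideanSpace.single i 1) (EuclideanSpace.single j 1) p

theorem integral_apply_mul_apply [IsFiniteMeasure μ] (hμ : ∀ᵐ y ∂μ, ‖y‖ ≤ 1)
    (htight : ∀ x, ∫ y, ⟪x, y⟫ ^ 2 ∂μ = ‖x‖ ^ 2 / d) (i j : Fin d) :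
    ∫ y, y i * y j ∂μ = if i = j then (d : ℝ)⁻¹ else 0 := by
  have hint (x) : Integrable (fun y => ⟪x, y⟫ ^ 2) μ := by
    simpa [sq] using memLp_one_iff_integrable.1 (memLp_inner_mul_inner hμ x x 1)
  have h := integral_inner_mul_inner hint htight (EuclideanSpace.single i 1)
    (EuclideanSpace.single j 1)
  simp only [EuclideanSpace.inner_single_left, PiLp.single_apply, map_one, one_mul] at h
  rw [h]
  split_ifs <;> simp

theorem sum_variance_apply_mul_apply [IsProbabilityMeasure μ] (hμ : ∀ᵐ y ∂μ, ‖y‖ = 1)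
    (htight : ∀ x, ∫ y, ⟪x, y⟫ ^ 2 ∂μ = ‖x‖ ^ 2 / d) :
    ∑ i, ∑ j, Var[fun y => y i * y j; μ] = 1 - (d : ℝ)⁻¹ := by
  have hμ' : ∀ᵐ y ∂μ, ‖y‖ ≤ 1 := hμ.mono fun y hy => hy.le
  have hL2 (i j : Fin d) := memLp_apply_mul_apply hμ' i j 2
  have fourth_moment : ∑ i, ∑ j, ∫ y, (y i * y j) ^ 2 ∂μ = 1 := by
    have hnorm : ∀ᵐ y ∂μ, ∑ i, ∑ j, (y i * y j) ^ 2 = 1 := by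
      filter_upwards [hμ] with y hy
      have hsq : ∑ i, y i ^ 2 = 1 := by
        simpa only [Real.norm_eq_abs, sq_abs, hy, one_pow] using (EuclideanSpace.norm_sq_eq y).symm
      simp_rw [mul_pow, ← Finset.mul_sum, ← Finset.sum_mul, hsq, one_mul]
    calc ∑ i, ∑ j, ∫ y, (y i * y j) ^ 2 ∂μ
        = ∫ y, ∑ i, ∑ j, (y i * y j) ^ 2 ∂μ := by
          rw [integral_finsetSum _ fun i _ =>
            integrable_finsetSum _ fun j _ => (hL2 i j).integrable_sq]
          simp_rw [integral_finsetSum _ fun j _ => (hL2 _ j).integrable_sq]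
      _ = 1 := by simp [integral_congr_ae hnorm]
  calc ∑ i, ∑ j, Var[fun y => y i * y j; μ]
      = ∑ i, ∑ j, (∫ y, (y i * y j) ^ 2 ∂μ - (if i = j then (d : ℝ)⁻¹ else 0) ^ 2) := by
        simp_rw [variance_eq_sub (hL2 _ _), integral_apply_mul_apply hμ' htight, Pi.pow_apply]
    _ = 1 - (d : ℝ)⁻¹ := by
        simp only [Finset.sum_sub_distrib, fourth_moment]
        rcases eq_or_ne (d : ℝ) 0 with hd | hd
        · simp [hd]
        · simp
          field_simp

end Euclidean

theorem stmt_9_general {d n : ℕ} (hn : 0 < n)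
    {Ω : Type*} [MeasurableSpace Ω] (P : Measure Ω) [IsProbabilityMeasure P]
    (μ : Fin n → Measure (EuclideanSpace ℝ (Fin d)))
    [∀ k, IsProbabilityMeasure (μ k)]
    (hsphere : ∀ k, μ k (Metric.sphere (0 : EuclideanSpace ℝ (Fin d)) 1) = 1)
    (X : Fin n → Ω → EuclideanSpace ℝ (Fin d))
    (hmeas : ∀ k, Measurable (X k))
    (hindep : iIndepFun X P)
    (hlaw : ∀ k, Measure.map (X k) P = μ k)
    (htight : ∀ k, ∀ x : EuclideanSpace ℝ (Fin d),
      (∫ y, ⟪x, y⟫ ^ 2 ∂μ k) = ‖x‖ ^ 2 / d) :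
    (∫ ω, ∑ i, ∑ j,
        (((n : ℝ)⁻¹ * ∑ k, X k ω i * X k ω j) -
          (if i = j then (d : ℝ)⁻¹ else 0)) ^ 2 ∂P) =
      (n : ℝ)⁻¹ * (1 - (d : ℝ)⁻¹) := by
  have : Nonempty (Fin n) := Fin.pos_iff_nonempty.1 hn
  have hX (k) : MeasurePreserving (X k) P (μ k) := ⟨hmeas k, hlaw k⟩
  have hμ (k) := ae_norm_eq_one_of_measure_sphere (hsphere k)
  have hμ' (k) : ∀ᵐ y ∂μ k, ‖y‖ ≤ 1 := (hμ k).mono fun _ hy => hy.le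
  have hentry (i j : Fin d) :=
    integral_sq_average_comp_sub_eq_sum_variance hindep hX (by fun_prop)
      (fun k => memLp_apply_mul_apply (hμ' k) i j 2)
      (fun k => integral_apply_mul_apply (hμ' k) (htight k) i j)
  simp only [Fintype.card_fin] at hentry
  have hentry_int (i j : Fin d) : Integrable (fun ω =>
      ((n : ℝ)⁻¹ * ∑ k, X k ω i * X k ω j - (if i = j then (d : ℝ)⁻¹ else 0)) ^ 2) P :=
    (((memLp_finsetSum _ fun k _ => (memLp_apply_mul_apply (hμ' k) i j 2).comp_measurePreserving
      (hX k)).const_mul _).sub (memLp_const _)).integrable_sq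
  calc _ = ∑ i, ∑ j, (n : ℝ)⁻¹ ^ 2 * ∑ k, Var[fun y => y i * y j; μ k] := by
        rw [integral_finsetSum _ fun i _ => integrable_finsetSum _ fun j _ => hentry_int i j]
        simp_rw [integral_finsetSum _ fun j _ => hentry_int _ j, hentry]
    _ = (n : ℝ)⁻¹ ^ 2 * ∑ k, ∑ i, ∑ j, Var[fun y => y i * y j; μ k] := by
        simp_rw [← Finset.mul_sum]
        exact congrArg _ ((Finset.sum_congr rfl fun i _ => Finset.sum_comm).trans Finset.sum_comm)
    _ = (n : ℝ)⁻¹ * (1 - (d : ℝ)⁻¹) := by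
        simp only [sum_variance_apply_mul_apply (hμ _) (htight _), Finset.sum_const,
          Finset.card_univ, Fintype.card_fin, nsmul_eq_mul]
        field_simp

/-- Random vectors independently distributed according to probabilistic unit norm tight
frames on the sphere: the mean squared distance of the scaled frame operator to
`(1/d)·I_d` equals `(1/n)(1 - 1/d)`. -/
theorem stmt_9 {d n : ℕ} (hd : 0 < d) (hn : 0 < n)
    {Ω : Type*} [MeasurableSpace Ω] (P : Measure Ω) [IsProbabilityMeasure P]
    (μ : Fin n → Measure (EuclideanSpace ℝ (Fin d)))
    [∀ k, IsProbabilityMeasure (μ k)]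
    (hsphere : ∀ k, μ k (Metric.sphere (0 : EuclideanSpace ℝ (Fin d)) 1) = 1)
    (X : Fin n → Ω → EuclideanSpace ℝ (Fin d))
    (hmeas : ∀ k, Measurable (X k))
    (hindep : iIndepFun X P)
    (hlaw : ∀ k, Measure.map (X k) P = μ k)
    (htight : ∀ k, ∀ x : EuclideanSpace ℝ (Fin d),
      (∫ y, ⟪x, y⟫ ^ 2 ∂μ k) = ‖x‖ ^ 2 / d) :
    (∫ ω, ∑ i, ∑ j,
        (((n : ℝ)⁻¹ * ∑ k, X k ω i * X k ω j) -
          (if i = j then (d : ℝ)⁻¹ else 0)) ^ 2 ∂P) =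
      (n : ℝ)⁻¹ * (1 - (d : ℝ)⁻¹) :=
  stmt_9_general hn P μ hsphere X hmeas hindep hlaw htight
end
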